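/- For each 0 ≤ d ≤ n, the span of the columns of W_a indexed by genotypes of degree d equals the span of the columns of W_0 indexed by genotypes of degree d, and the ambient space decomposes as the orthogonal direct sum of these subspaces over d = 0, 1, ..., n. -/

import Mathlib

open RealInnerProductSpace
def wronOmega {m : ℕ} [NeZero m] (x y : Fin m) : ℝ :=
  if x ≠ 0 ∧ x = y then 1 else 0

def wronMu {m : ℕ} [NeZero m] (x y : Fin m) : ℝ :=
  if x = 0 ∨ y = 0 then 1 else if x = y then -1 else 0

def Wa {n : ℕ} (m : Fin n → ℕ) [∀ i, NeZero (m i)] :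
    Matrix (∀ i, Fin (m i)) (∀ i, Fin (m i)) ℝ :=
  fun g h => ∏ i, (1 - (m i : ℝ) * wronOmega (g i) (h i))

def W0 {n : ℕ} (m : Fin n → ℕ) [∀ i, NeZero (m i)] :
    Matrix (∀ i, Fin (m i)) (∀ i, Fin (m i)) ℝ :=
  fun g h => ∏ i, wronMu (g i) (h i)

def deg {n : ℕ} {m : Fin n → ℕ} [∀ i, NeZero (m i)] (g : ∀ i, Fin (m i)) : ℕ :=
  (Finset.univ.filter fun i => g i ≠ 0).card

/-- Span of the columns of `Wa` indexed by genotypes of degree `d`,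
as a subspace of the Euclidean space indexed by genotypes. -/
def Sa {n : ℕ} (m : Fin n → ℕ) [∀ i, NeZero (m i)] (d : ℕ) :
    Submodule ℝ (EuclideanSpace ℝ (∀ i, Fin (m i))) :=
  Submodule.span ℝ ((fun g => (WithLp.toLp 2 (fun x => Wa m x g) : EuclideanSpace ℝ (∀ i, Fin (m i)))) ''
    {g | deg g = d})

/-- Span of the columns of `W0` indexed by genotypes of degree `d`. -/
def Sz {n : ℕ} (m : Fin n → ℕ) [∀ i, NeZero (m i)] (d : ℕ) :
    Submodule ℝ (EuclideanSpace ℝ (∀ i, Fin (m i))) :=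
  Submodule.span ℝ ((fun g => (WithLp.toLp 2 (fun x => W0 m x g) : EuclideanSpace ℝ (∀ i, Fin (m i)))) ''
    {g | deg g = d})

/-!
Both matrices are Kronecker products over the loci of the `k × k` matrices `A = 1 - k ω` and
`M = μ` (with `k = m i`). Each is symmetric, `A M = M A = k • 1`, and in each of them column `0`
is the constant vector while the other columns are orthogonal to it. So the change-of-basis
matrices `A = M (Aᵀ A / k)` and `M = A (Mᵀ M / k)`, as well as the Gram matrix `Aᵀ A`, only
connect an index `0` with `0` and a nonzero index with a nonzero one. Their Kronecker products
therefore only connect genotypes with the same zero pattern, hence of the same degree; and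
`A (M / k) = 1` makes the columns of `W_a` span everything.
-/

namespace Matrix

variable {ι : Type*} [Fintype ι] {X Y Z : ι → Type*} {R : Type*}

def piKronecker [CommMonoid R] (A : ∀ i, Matrix (X i) (Y i) R) :
    Matrix (∀ i, X i) (∀ i, Y i) R :=
  of fun x y => ∏ i, A i (x i) (y i)

@[simp]
theorem piKronecker_apply [CommMonoid R] (A : ∀ i, Matrix (X i) (Y i) R) (x : ∀ i, X i)
    (y : ∀ i, Y i) : piKronecker A x y = ∏ i, A i (x i) (y i) :=
  rfl

theorem piKronecker_transpose [CommMonoid R] (A : ∀ i, Matrix (X i) (Y i) R) :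
    (piKronecker A)ᵀ = piKronecker fun i => (A i)ᵀ :=
  rfl

theorem piKronecker_mul [CommSemiring R] [DecidableEq ι] [∀ i, Fintype (Y i)]
    (A : ∀ i, Matrix (X i) (Y i) R) (B : ∀ i, Matrix (Y i) (Z i) R) :
    piKronecker (fun i => A i * B i) = piKronecker A * piKronecker B := by
  ext x z
  simp only [piKronecker_apply, mul_apply, Fintype.prod_sum, Finset.prod_mul_distrib]

theorem piKronecker_one [CommMonoidWithZero R] [∀ i, DecidableEq (X i)] :
    piKronecker (fun i => (1 : Matrix (X i) (X i) R)) = 1 := by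
  ext x y
  by_cases hxy : x = y
  · subst hxy
    simp
  · obtain ⟨i, hi⟩ := Function.ne_iff.1 hxy
    simp only [piKronecker_apply, one_apply_ne hxy]
    exact Finset.prod_eq_zero (Finset.mem_univ i) (one_apply_ne hi)

theorem mul_inv_smul_transpose_mul_self {K : Type*} [DecidableEq ι] [Field K]
    {P Q : Matrix ι ι K} {c : K} (hc : c ≠ 0) (hP : Pᵀ = P) (hQP : Q * P = c • 1) :
    Q * (c⁻¹ • (Pᵀ * P)) = P := by
  rw [hP, mul_smul_comm, ← Matrix.mul_assoc, hQP, smul_mul_assoc, Matrix.one_mul,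
    inv_smul_smul₀ hc]

end Matrix

open Matrix

section columns

variable {ι κ ν : Type*}

theorem inner_toLp_col_col [Fintype ι] (P Q : Matrix ι κ ℝ) (g h : κ) :
    inner ℝ (WithLp.toLp 2 (fun x => P x g) : EuclideanSpace ℝ ι)
      (WithLp.toLp 2 (fun x => Q x h)) = (Pᵀ * Q) g h := by
  simp [EuclideanSpace.inner_toLp_toLp, mul_apply, dotProduct, mul_comm]

theorem toLp_col_mul_mem_span [Fintype κ] (P : Matrix ι κ ℝ) (Q : Matrix κ ν ℝ) {S : Set κ}
    {g : ν} (hQ : ∀ h, Q h g ≠ 0 → h ∈ S) :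
    (WithLp.toLp 2 (fun x => (P * Q) x g) : EuclideanSpace ℝ ι) ∈
      Submodule.span ℝ ((fun h => (WithLp.toLp 2 (fun x => P x h) : EuclideanSpace ℝ ι)) '' S) := by
  have hcol : (WithLp.toLp 2 (fun x => (P * Q) x g) : EuclideanSpace ℝ ι) =
      ∑ h, Q h g • WithLp.toLp 2 (fun x => P x h) := by
    ext x
    simp [mul_apply, mul_comm]
  rw [hcol]
  refine Submodule.sum_mem _ fun h _ => ?_
  by_cases hh : Q h g = 0
  · simp [hh]
  · exact Submodule.smul_mem _ _ (Submodule.subset_span ⟨h, hQ h hh, rfl⟩)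

theorem span_toLp_col_eq_top_of_mul_eq_one [Fintype ι] [DecidableEq ι] [Fintype κ]
    {P : Matrix ι κ ℝ} {Q : Matrix κ ι ℝ} (hPQ : P * Q = 1) :
    Submodule.span ℝ (Set.range fun h => (WithLp.toLp 2 (fun x => P x h) : EuclideanSpace ℝ ι)) =
      ⊤ := by
  rw [eq_top_iff, ← (EuclideanSpace.basisFun ι ℝ).toBasis.span_eq, Submodule.span_le]
  rintro - ⟨g, rfl⟩
  have hg := toLp_col_mul_mem_span P Q (S := Set.univ) (g := g) fun _ _ => trivial
  rw [hPQ, Set.image_univ] at hg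
  have hbasis : (EuclideanSpace.basisFun ι ℝ).toBasis g =
      WithLp.toLp 2 fun x => (1 : Matrix ι ι ℝ) x g := by
    ext x
    simp [one_apply]
  rwa [SetLike.mem_coe, hbasis]

end columns

section locus

def locusWa (k : ℕ) [NeZero k] : Matrix (Fin k) (Fin k) ℝ :=
  of fun x y => 1 - (k : ℝ) * wronOmega x y

def locusW0 (k : ℕ) [NeZero k] : Matrix (Fin k) (Fin k) ℝ :=
  of fun x y => wronMu x y

variable {k : ℕ} [NeZero k]

def IsBlockDiagonalAtZero (C : Matrix (Fin k) (Fin k) ℝ) : Prop :=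
  ∀ a b, C a b ≠ 0 → (a = 0 ↔ b = 0)

/-- Column `0` is the constant vector `1` and the other columns lie in `1ᗮ`. -/
def IsAdaptedToConstants (P : Matrix (Fin k) (Fin k) ℝ) : Prop :=
  (∀ x, P x 0 = 1) ∧ ∀ b, b ≠ 0 → ∑ x, P x b = 0

theorem IsBlockDiagonalAtZero.smul {C : Matrix (Fin k) (Fin k) ℝ} (hC : IsBlockDiagonalAtZero C)
    (c : ℝ) : IsBlockDiagonalAtZero (c • C) :=
  fun a b hab => hC a b (right_ne_zero_of_mul hab)

theorem IsAdaptedToConstants.isBlockDiagonalAtZero_transpose_mul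
    {P Q : Matrix (Fin k) (Fin k) ℝ} (hP : IsAdaptedToConstants P) (hQ : IsAdaptedToConstants Q) :
    IsBlockDiagonalAtZero (Pᵀ * Q) := by
  intro a b hab
  by_contra hiff
  rcases eq_or_ne a 0 with rfl | ha
  · have hb : b ≠ 0 := fun hb => hiff (by simp [hb])
    simp [mul_apply, hP.1, hQ.2 b hb] at hab
  · have hb : b = 0 := by by_contra hb; exact hiff (iff_of_false ha hb)
    subst hb
    simp [mul_apply, hQ.1, hP.2 a ha] at hab

theorem wronOmega_zero_right (x : Fin k) : wronOmega x 0 = 0 :=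
  if_neg fun h => h.1 h.2

theorem wronOmega_of_ne_zero {b : Fin k} (hb : b ≠ 0) (x : Fin k) :
    wronOmega x b = if x = b then 1 else 0 := by
  unfold wronOmega
  rcases eq_or_ne x b with rfl | hxb
  · simp [hb]
  · simp [hxb]

theorem wronMu_zero_right (x : Fin k) : wronMu x 0 = 1 :=
  if_pos (Or.inr rfl)

theorem wronMu_of_ne_zero {b : Fin k} (hb : b ≠ 0) (x : Fin k) :
    wronMu x b = (if x = 0 then 1 else 0) - if x = b then 1 else 0 := by
  unfold wronMu
  rcases eq_or_ne x 0 with rfl | hx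
  · simp [hb.symm]
  · rcases eq_or_ne x b with rfl | hxb <;> simp [*]

theorem locusWa_transpose : (locusWa k)ᵀ = locusWa k := by
  ext x y
  rcases eq_or_ne x 0 with rfl | hx
  · rcases eq_or_ne y 0 with rfl | hy
    · rfl
    · simp [locusWa, wronOmega_zero_right, wronOmega_of_ne_zero hy, hy.symm]
  · rcases eq_or_ne y 0 with rfl | hy
    · simp [locusWa, wronOmega_zero_right, wronOmega_of_ne_zero hx, hx.symm]
    · simp [locusWa, wronOmega_of_ne_zero hx, wronOmega_of_ne_zero hy, eq_comm]

theorem locusW0_transpose : (locusW0 k)ᵀ = locusW0 k := by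
  ext x y
  simp only [transpose_apply, locusW0, of_apply, wronMu, or_comm, eq_comm]

theorem isAdaptedToConstants_locusWa : IsAdaptedToConstants (locusWa k) := by
  refine ⟨fun x => by simp [locusWa, wronOmega_zero_right], fun b hb => ?_⟩
  simp [locusWa, wronOmega_of_ne_zero hb, Finset.sum_sub_distrib]

theorem isAdaptedToConstants_locusW0 : IsAdaptedToConstants (locusW0 k) := by
  refine ⟨fun x => by simp [locusW0, wronMu_zero_right], fun b hb => ?_⟩
  simp [locusW0, wronMu_of_ne_zero hb, Finset.sum_sub_distrib]

theorem locusWa_mul_locusW0 : locusWa k * locusW0 k = (k : ℝ) • 1 := by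
  ext x z
  rcases eq_or_ne z 0 with rfl | hz
  · have hrow : ∑ y, locusWa k x y = ∑ y, locusWa k y x := by
      simp_rw [← transpose_apply (locusWa k) x, locusWa_transpose]
    simp only [mul_apply, locusW0, of_apply, wronMu_zero_right, mul_one, hrow]
    rcases eq_or_ne x 0 with rfl | hx
    · simp [isAdaptedToConstants_locusWa.1]
    · simp [isAdaptedToConstants_locusWa.2 x hx, hx]
  · simp [mul_apply, locusW0, wronMu_of_ne_zero hz, mul_sub, Finset.sum_sub_distrib, locusWa,
      wronOmega_zero_right, wronOmega_of_ne_zero hz, one_apply]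

theorem locusW0_mul_locusWa : locusW0 k * locusWa k = (k : ℝ) • 1 := by
  rw [← locusWa_transpose, ← locusW0_transpose, ← transpose_mul, locusWa_mul_locusW0,
    transpose_smul, transpose_one]

end locus

section genotype

variable {n : ℕ} {m : Fin n → ℕ} [∀ i, NeZero (m i)]

theorem deg_eq_of_forall_eq_zero_iff {g h : ∀ i, Fin (m i)} (hgh : ∀ i, g i = 0 ↔ h i = 0) :
    deg g = deg h := by
  unfold deg
  congr 1
  exact Finset.filter_congr fun i _ => not_congr (hgh i)

theorem deg_eq_of_piKronecker_ne_zero {C : ∀ i, Matrix (Fin (m i)) (Fin (m i)) ℝ}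
    (hC : ∀ i, IsBlockDiagonalAtZero (C i)) {g h : ∀ i, Fin (m i)} (hgh : piKronecker C g h ≠ 0) :
    deg g = deg h := by
  rw [piKronecker_apply, Finset.prod_ne_zero_iff] at hgh
  exact deg_eq_of_forall_eq_zero_iff fun i => hC i _ _ (hgh i (Finset.mem_univ i))

theorem span_col_deg_le_of_eq_mul_piKronecker {P Q : Matrix (∀ i, Fin (m i)) (∀ i, Fin (m i)) ℝ}
    {C : ∀ i, Matrix (Fin (m i)) (Fin (m i)) ℝ} (hC : ∀ i, IsBlockDiagonalAtZero (C i))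
    (hPQ : P = Q * piKronecker C) (d : ℕ) :
    Submodule.span ℝ ((fun g => (WithLp.toLp 2 (fun x => P x g) : EuclideanSpace ℝ _)) ''
        {g | deg g = d}) ≤
      Submodule.span ℝ ((fun g => (WithLp.toLp 2 (fun x => Q x g) : EuclideanSpace ℝ _)) ''
        {g | deg g = d}) := by
  rw [Submodule.span_le]
  rintro - ⟨g, rfl : deg g = _, rfl⟩
  rw [hPQ]
  exact toLp_col_mul_mem_span _ _ fun h hh => deg_eq_of_piKronecker_ne_zero hC hh

variable (m)

theorem Wa_eq_piKronecker : Wa m = piKronecker fun i => locusWa (m i) :=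
  rfl

theorem W0_eq_piKronecker : W0 m = piKronecker fun i => locusW0 (m i) :=
  rfl

theorem Wa_eq_W0_mul_piKronecker :
    Wa m = W0 m * piKronecker fun i => (m i : ℝ)⁻¹ • ((locusWa (m i))ᵀ * locusWa (m i)) := by
  rw [Wa_eq_piKronecker, W0_eq_piKronecker, ← piKronecker_mul]
  congr 1
  funext i
  exact (mul_inv_smul_transpose_mul_self (Nat.cast_ne_zero.2 (NeZero.ne _)) locusWa_transpose
    locusW0_mul_locusWa).symm

theorem W0_eq_Wa_mul_piKronecker :
    W0 m = Wa m * piKronecker fun i => (m i : ℝ)⁻¹ • ((locusW0 (m i))ᵀ * locusW0 (m i)) := by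
  rw [Wa_eq_piKronecker, W0_eq_piKronecker, ← piKronecker_mul]
  congr 1
  funext i
  exact (mul_inv_smul_transpose_mul_self (Nat.cast_ne_zero.2 (NeZero.ne _)) locusW0_transpose
    locusWa_mul_locusW0).symm

theorem Wa_mul_piKronecker_eq_one :
    Wa m * piKronecker (fun i => (m i : ℝ)⁻¹ • locusW0 (m i)) = 1 := by
  rw [Wa_eq_piKronecker, ← piKronecker_mul, ← piKronecker_one]
  congr 1
  funext i
  rw [mul_smul_comm, locusWa_mul_locusW0, inv_smul_smul₀ (Nat.cast_ne_zero.2 (NeZero.ne _))]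

theorem inner_toLp_col_Wa_eq_zero {g h : ∀ i, Fin (m i)} (hgh : deg g ≠ deg h) :
    inner ℝ (WithLp.toLp 2 (fun x => Wa m x g) : EuclideanSpace ℝ _)
      (WithLp.toLp 2 (fun x => Wa m x h)) = 0 := by
  rw [inner_toLp_col_col, Wa_eq_piKronecker, piKronecker_transpose, ← piKronecker_mul]
  by_contra hne
  exact hgh (deg_eq_of_piKronecker_ne_zero (fun i =>
    isAdaptedToConstants_locusWa.isBlockDiagonalAtZero_transpose_mul
      isAdaptedToConstants_locusWa) hne)

theorem Sa_eq_Sz (d : ℕ) : Sa m d = Sz m d :=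
  le_antisymm
    (span_col_deg_le_of_eq_mul_piKronecker (fun _ =>
      (isAdaptedToConstants_locusWa.isBlockDiagonalAtZero_transpose_mul
        isAdaptedToConstants_locusWa).smul _) (Wa_eq_W0_mul_piKronecker m) d)
    (span_col_deg_le_of_eq_mul_piKronecker (fun _ =>
      (isAdaptedToConstants_locusW0.isBlockDiagonalAtZero_transpose_mul
        isAdaptedToConstants_locusW0).smul _) (W0_eq_Wa_mul_piKronecker m) d)

theorem isOrtho_Sa {d d' : ℕ} (hdd' : d ≠ d') : Sa m d ⟂ Sa m d' := by
  rw [Sa, Sa, Submodule.isOrtho_span]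
  rintro - ⟨g, rfl : deg g = d, rfl⟩ - ⟨h, rfl : deg h = d', rfl⟩
  exact inner_toLp_col_Wa_eq_zero m hdd'

theorem iSup_Sa_eq_top : ⨆ d ∈ Finset.Iic n, Sa m d = ⊤ := by
  rw [eq_top_iff, ← span_toLp_col_eq_top_of_mul_eq_one (Wa_mul_piKronecker_eq_one m),
    Submodule.span_le]
  rintro - ⟨g, rfl⟩
  have hdeg : deg g ≤ n := (Finset.card_filter_le _ _).trans (by simp)
  exact Submodule.mem_iSup_of_mem (deg g)
    (Submodule.mem_iSup_of_mem (Finset.mem_Iic.2 hdeg) (Submodule.subset_span ⟨g, rfl, rfl⟩))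

end genotype

theorem orthogonal_decomposition {n : ℕ} (m : Fin n → ℕ) [∀ i, NeZero (m i)] :
    (∀ d, Sa m d = Sz m d) ∧
    (∀ d d', d ≠ d' → ∀ u ∈ Sa m d, ∀ v ∈ Sa m d', inner ℝ u v = (0 : ℝ)) ∧
    (⨆ d ∈ Finset.Iic n, Sa m d = ⊤) :=
  ⟨Sa_eq_Sz m, fun _ _ hdd' _ hu _ hv => (isOrtho_Sa m hdd').inner_eq hu hv, iSup_Sa_eq_top m⟩
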